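/- Let f, g : D → ℝ≥0 be measurable on a finite measure space. Then ∫_D f·g ≤ ∫₀^∞ ∫₀^∞ min{ |{f > s}|, |{g > t}| } ds dt. -/

import Mathlib

open MeasureTheory

/-!
Apply the layer-cake formula to `f` with respect to the weighted measure `g • μ`; the weight of a
superlevel set `{f > s}` is `∫_{f > s} g dμ`, to which the layer-cake formula for `g` on that set
applies. This yields `∫ f g dμ = ∫₀^∞ ∫₀^∞ μ({f > s} ∩ {g > t}) dt ds`, and
`μ(A ∩ B) ≤ min (μ A) (μ B)`.
-/

theorem lintegral_ofReal_mul_eq_lintegral_lintegral_measure_inter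
    {α : Type*} [MeasurableSpace α] (μ : Measure α) {f g : α → ℝ}
    (hf : AEMeasurable f μ) (hg : AEMeasurable g μ) (hf0 : 0 ≤ᵐ[μ] f) (hg0 : 0 ≤ᵐ[μ] g) :
    ∫⁻ x, ENNReal.ofReal (f x * g x) ∂μ
      = ∫⁻ s in Set.Ioi (0:ℝ), ∫⁻ t in Set.Ioi (0:ℝ), μ ({x | s < f x} ∩ {x | t < g x}) := by
  set ν := μ.withDensity fun x ↦ ENNReal.ofReal (g x)
  have weighted : ∫⁻ x, ENNReal.ofReal (f x * g x) ∂μ = ∫⁻ x, ENNReal.ofReal (f x) ∂ν := by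
    rw [lintegral_withDensity_eq_lintegral_mul₀ hg.ennreal_ofReal hf.ennreal_ofReal]
    refine lintegral_congr_ae ?_
    filter_upwards [hf0] with x hx
    rw [ENNReal.ofReal_mul hx, mul_comm, Pi.mul_apply]
  have hν : ν ≪ μ := withDensity_absolutelyContinuous μ _
  rw [weighted, lintegral_eq_lintegral_meas_lt ν (hν.ae_le hf0) (hf.mono' hν)]
  refine setLIntegral_congr_fun measurableSet_Ioi fun s _ ↦ ?_
  have hs : NullMeasurableSet {x | s < f x} μ := nullMeasurableSet_lt aemeasurable_const hf
  rw [withDensity_apply₀ _ hs,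
    lintegral_eq_lintegral_meas_lt _ (ae_restrict_of_ae hg0) hg.restrict]
  refine setLIntegral_congr_fun measurableSet_Ioi fun t _ ↦ ?_
  rw [Measure.restrict_apply₀' hs, Set.inter_comm]

theorem product_upper_bound_by_distribution_general
    {α : Type*} [MeasurableSpace α] (μ : Measure α)
    (f g : α → ℝ) (hf : Measurable f) (hg : Measurable g)
    (hf0 : ∀ x, 0 ≤ f x) (hg0 : ∀ x, 0 ≤ g x) :
    (∫⁻ x, ENNReal.ofReal (f x * g x) ∂μ)
      ≤ ∫⁻ s in Set.Ioi (0:ℝ), ∫⁻ t in Set.Ioi (0:ℝ),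
          min (μ {x | s < f x}) (μ {x | t < g x}) := by
  rw [lintegral_ofReal_mul_eq_lintegral_lintegral_measure_inter μ hf.aemeasurable hg.aemeasurable
    (.of_forall hf0) (.of_forall hg0)]
  gcongr with s t
  exact le_min (measure_mono Set.inter_subset_left) (measure_mono Set.inter_subset_right)

theorem product_upper_bound_by_distribution
    {α : Type*} [MeasurableSpace α] (μ : Measure α) [IsFiniteMeasure μ]
    (f g : α → ℝ) (hf : Measurable f) (hg : Measurable g)
    (hf0 : ∀ x, 0 ≤ f x) (hg0 : ∀ x, 0 ≤ g x) :
    (∫⁻ x, ENNReal.ofReal (f x * g x) ∂μ)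
      ≤ ∫⁻ s in Set.Ioi (0:ℝ), ∫⁻ t in Set.Ioi (0:ℝ),
          min (μ {x | s < f x}) (μ {x | t < g x}) :=
  product_upper_bound_by_distribution_general μ f g hf hg hf0 hg0
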